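/- Let (V, I) be an interval system. If π is a completely join-irreducible element of D(V, I), then π* (the join of all decompositions strictly below π) is a strong decomposition, i.e., all its blocks are strong sets of (V, I). -/

import Mathlib

variable {V : Type*}

/-- `Q` is a closure system on `V`: it contains `V` and is closed under
intersections of nonempty subfamilies. -/
def IsClosureSystem (Q : Set (Set V)) : Prop :=
  Set.univ ∈ Q ∧ ∀ F ⊆ Q, F.Nonempty → ⋂₀ F ∈ Q

/-- Algebraic: the union of any nonempty chain of closed sets is closed. -/
def IsAlgebraicSystem (Q : Set (Set V)) : Prop :=
  ∀ C ⊆ Q, C.Nonempty → IsChain (· ⊆ ·) C → ⋃₀ C ∈ Q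

/-- Condition (I₀): the empty set and all singletons are closed. -/
def CondI0 (Q : Set (Set V)) : Prop := ∅ ∈ Q ∧ ∀ x : V, {x} ∈ Q

/-- Condition (I₁): the union of two intersecting members is a member. -/
def CondI1 (Q : Set (Set V)) : Prop :=
  ∀ A ∈ Q, ∀ B ∈ Q, (A ∩ B).Nonempty → A ∪ B ∈ Q

/-- Condition (I₂): differences of properly overlapping members are members. -/
def CondI2 (Q : Set (Set V)) : Prop :=
  ∀ A ∈ Q, ∀ B ∈ Q, (A ∩ B).Nonempty → ¬ A ⊆ B → ¬ B ⊆ A → A \ B ∈ Q ∧ B \ A ∈ Q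

/-- An interval system: an algebraic closure system satisfying (I₀), (I₁), (I₂). -/
def IsIntervalSystem (Q : Set (Set V)) : Prop :=
  IsClosureSystem Q ∧ IsAlgebraicSystem Q ∧ CondI0 Q ∧ CondI1 Q ∧ CondI2 Q

/-- `A` is a strong set of the closure system `Q`. -/
def IsStrong (Q : Set (Set V)) (A : Set V) : Prop :=
  A ∈ Q ∧ ∀ B ∈ Q, (A ∩ B).Nonempty → A ⊆ B ∨ B ⊆ A

/-- A decomposition: a partition of `V` (coded as a setoid) all of whose
blocks belong to `Q`.  The refinement order on partitions corresponds to the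
order on `Setoid V` (finer below). -/
def IsDecomp (Q : Set (Set V)) (π : Setoid V) : Prop :=
  ∀ x : V, {y | π.r x y} ∈ Q

/-- The lattice `D(V,Q)` of decompositions, as a subtype of `Setoid V`
with the induced (refinement) partial order. -/
abbrev Decomp (Q : Set (Set V)) := {π : Setoid V // IsDecomp Q π}

/-- `π_A`: the partition with block `A` and all other blocks singletons. -/
def piA (A : Set V) : Setoid V :=
  ⟨fun a b => a = b ∨ (a ∈ A ∧ b ∈ A), by
    constructor
    · intro a; exact Or.inl rfl
    · intro a b h; aesop
    · intro a b c h1 h2; aesop⟩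

/-- A decomposition of `A` in the restricted closure system `(A, Q_A)`,
`Q_A = {C ∩ A | C ∈ Q}`: a partition of `A` all of whose blocks are of the
form `C ∩ A` with `C ∈ Q`. -/
def IsRestDecomp (Q : Set (Set V)) (A : Set V) (μ : Setoid ↥A) : Prop :=
  ∀ x : ↥A, ∃ C ∈ Q, Subtype.val '' {y | μ.r x y} = C ∩ A

/-- `μ` is a greatest proper decomposition of `A` in `(A, Q_A)`: it is proper
(different from `{A}`, i.e. `μ ≠ ⊤`) and every proper decomposition of `A`
refines it. -/
def IsGreatestProperDecomp (Q : Set (Set V)) (A : Set V) (μ : Setoid ↥A) : Prop :=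
  IsRestDecomp Q A μ ∧ μ ≠ ⊤ ∧
    ∀ ν : Setoid ↥A, IsRestDecomp Q A ν → ν ≠ ⊤ → ν ≤ μ

/-- `π` is completely join-irreducible in the lattice `D(V,Q)`: it is not the
least decomposition `Δ` and whenever it is the join (least upper bound within
`D(V,Q)`) of a family of decompositions, it is one of them. -/
def IsCJI (Q : Set (Set V)) (π : Decomp Q) : Prop :=
  π.1 ≠ ⊥ ∧ ∀ S : Set (Decomp Q), IsLUB S π → π ∈ S

/-! Write `τ` for `π*`. As `π` is completely join-irreducible, `τ < π` and `τ` is the greatest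
decomposition strictly below `π`. Suppose a block `A` of `τ`, inside the block `P` of `π`, properly
overlaps an interval `B`.

If `A = P`, splitting `P` into `A ∩ B` and `A \ B` (an interval by (I₂)) gives a decomposition
strictly below `π`, hence below `τ`; since it agrees with `π` outside the `τ`-block `A`, this forces
`π ≤ τ`.

If `A ⊂ P`, one of `B ∩ P` and `P \ B` is an interval `B' ⊆ P` still properly overlapping `A`. The
decomposition `π_{B'}` lies below `π`; it is not `π`, as `A` would then lie in `B'`, and not below
`τ`, as `B'` would then lie in `A`. -/

def Overlap (A B : Set V) : Prop :=
  (A ∩ B).Nonempty ∧ ¬A ⊆ B ∧ ¬B ⊆ A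

theorem isStrong_iff {Q : Set (Set V)} {A : Set V} :
    IsStrong Q A ↔ A ∈ Q ∧ ∀ B ∈ Q, ¬Overlap A B := by
  simp only [IsStrong, Overlap, not_and, not_not, or_iff_not_imp_left]

theorem IsClosureSystem.inter_mem {Q : Set (Set V)} (hQ : IsClosureSystem Q) {A B : Set V}
    (hA : A ∈ Q) (hB : B ∈ Q) : A ∩ B ∈ Q := by
  simpa only [Set.sInter_pair] using
    hQ.2 {A, B} (Set.insert_subset hA (Set.singleton_subset_iff.2 hB)) (Set.insert_nonempty A {B})

theorem Setoid.rel_iff_of_rel {π : Setoid V} {x a y : V} (h : π.r x a) : π.r a y ↔ π.r x y :=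
  ⟨π.trans' h, π.trans' (π.symm' h)⟩

theorem isDecomp_piA {Q : Set (Set V)} (hQ : ∀ x : V, {x} ∈ Q) {B : Set V} (hB : B ∈ Q) :
    IsDecomp Q (piA B) := by
  intro a
  by_cases ha : a ∈ B
  · convert hB using 1
    ext b
    exact ⟨by rintro (rfl | ⟨-, hb⟩) <;> assumption, fun hb => Or.inr ⟨ha, hb⟩⟩
  · convert hQ a using 1
    ext b
    exact ⟨by rintro (rfl | ⟨ha', -⟩); exacts [rfl, absurd ha' ha], fun hb => Or.inl hb.symm⟩

theorem piA_le_of_subset_block {π : Setoid V} {x : V} {B : Set V} (hB : B ⊆ {y | π.r x y}) :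
    piA B ≤ π := by
  rintro a b (rfl | ⟨ha, hb⟩)
  exacts [π.refl' a, π.trans' (π.symm' (hB ha)) (hB hb)]

theorem Setoid.inf_ker_mem_iff {π : Setoid V} {C : Set V} {a b : V} :
    (π ⊓ Setoid.ker (· ∈ C)).r a b ↔ π.r a b ∧ (a ∈ C ↔ b ∈ C) :=
  Setoid.inf_iff_and.trans (and_congr Iff.rfl (Setoid.ker_def.trans eq_iff_iff))

/-- `π ⊓ ker (· ∈ C)` splits the block `P` of `x` into `C` and `P \ C`, keeping the others. -/
theorem isDecomp_inf_ker_mem {Q : Set (Set V)} {π : Setoid V} (hπ : IsDecomp Q π) {x : V}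
    {C : Set V} (hCP : C ⊆ {y | π.r x y}) (hC : C ∈ Q) (hPC : {y | π.r x y} \ C ∈ Q) :
    IsDecomp Q (π ⊓ Setoid.ker (· ∈ C)) := by
  intro a
  simp only [Setoid.inf_ker_mem_iff]
  by_cases haP : π.r x a
  · simp only [Setoid.rel_iff_of_rel haP]
    by_cases haC : a ∈ C
    · convert hC using 1
      exact Set.ext fun y => ⟨fun hy => hy.2.1 haC, fun hy => ⟨hCP hy, iff_of_true haC hy⟩⟩
    · convert hPC using 1
      exact Set.ext fun y => and_congr Iff.rfl (iff_false_left haC)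
  · convert hπ a using 1
    refine Set.ext fun y => and_iff_left_of_imp fun hay => ?_
    exact iff_of_false (fun ha => haP (hCP ha)) fun hy => haP (π.trans' (hCP hy) (π.symm' hay))

theorem IsCJI.isGreatest_of_isLUB {Q : Set (Set V)} {π τ : Decomp Q} (hπ : IsCJI Q π)
    (hτ : IsLUB {σ | σ < π} τ) : IsGreatest {σ | σ < π} τ := by
  refine ⟨(hτ.2 fun _ h => le_of_lt h).lt_of_ne ?_, hτ.1⟩
  rintro rfl
  exact lt_irrefl τ (hπ.2 _ hτ)

theorem exists_overlap_subset {Q : Set (Set V)} (hI2 : CondI2 Q)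
    (hinter : ∀ A ∈ Q, ∀ B ∈ Q, A ∩ B ∈ Q) {A B P : Set V} (hB : B ∈ Q) (hP : P ∈ Q)
    (hAP : A ⊂ P) (hAB : Overlap A B) : ∃ B' ∈ Q, B' ⊆ P ∧ Overlap A B' := by
  obtain ⟨⟨c, hcA, hcB⟩, hAnB, hBnA⟩ := hAB
  by_cases hBP : B ∩ P ⊆ A
  · obtain ⟨a, haA, haB⟩ := Set.not_subset.1 hAnB
    obtain ⟨p, hpP, hpA⟩ := Set.exists_of_ssubset hAP
    have hPB : P \ B ∈ Q :=
      (hI2 P hP B hB ⟨c, hAP.1 hcA, hcB⟩ (fun h => hAnB (hAP.1.trans h))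
        fun h => hBnA fun b hb => hBP ⟨hb, h hb⟩).1
    refine ⟨P \ B, hPB, Set.sdiff_subset, ⟨a, haA, hAP.1 haA, haB⟩, fun h => (h hcA).2 hcB, ?_⟩
    exact fun h => hpA (h ⟨hpP, fun hpB => hpA (hBP ⟨hpB, hpP⟩)⟩)
  · exact ⟨B ∩ P, hinter B hB P hP, Set.inter_subset_right, ⟨c, hcA, hcB, hAP.1 hcA⟩,
      fun h => hAnB (h.trans Set.inter_subset_left), hBP⟩

section GreatestBelow

variable {Q : Set (Set V)} {π τ : Decomp Q} {x : V}

theorem block_subset_block (hτ : IsGreatest {σ | σ < π} τ) : {y | τ.1.r x y} ⊆ {y | π.1.r x y} :=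
  fun _ hy => (show τ < π from hτ.1).le hy

theorem not_overlap_of_block_eq (hτ : IsGreatest {σ | σ < π} τ) (hI2 : CondI2 Q)
    (hinter : ∀ A ∈ Q, ∀ B ∈ Q, A ∩ B ∈ Q) (hAP : {y | τ.1.r x y} = {y | π.1.r x y})
    {B : Set V} (hB : B ∈ Q) : ¬Overlap {y | τ.1.r x y} B := by
  rintro ⟨⟨c, hcA, hcB⟩, hAnB, hBnA⟩
  obtain ⟨a, haA, haB⟩ := Set.not_subset.1 hAnB
  set A := {y | τ.1.r x y}
  have hCP : A ∩ B ⊆ {y | π.1.r x y} := hAP ▸ Set.inter_subset_left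
  have hPC : {y | π.1.r x y} \ (A ∩ B) ∈ Q := by
    rw [← hAP, Set.sdiff_self_inter]
    exact (hI2 A (τ.2 x) B hB ⟨c, hcA, hcB⟩ hAnB hBnA).1
  let σ : Decomp Q := ⟨_, isDecomp_inf_ker_mem π.2 hCP (hinter A (τ.2 x) B hB) hPC⟩
  have hσπ : σ < π := by
    refine lt_of_le_of_ne (show σ.1 ≤ π.1 from inf_le_left) fun h => ?_
    have hca : σ.1.r c a :=
      h ▸ π.1.trans' (π.1.symm' (block_subset_block hτ hcA)) (block_subset_block hτ haA)
    exact haB ((Setoid.inf_ker_mem_iff.1 hca).2.1 ⟨hcA, hcB⟩).2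
  have hπτ : π ≤ τ := by
    intro a b hab
    by_cases hxa : π.1.r x a
    · have hxa' : a ∈ A := hAP ▸ hxa
      have hxb : b ∈ A := hAP ▸ π.1.trans' hxa hab
      exact τ.1.trans' (τ.1.symm' hxa') hxb
    · refine hτ.2 hσπ (Setoid.inf_ker_mem_iff.2 ⟨hab, iff_of_false ?_ ?_⟩)
      · exact fun ha => hxa (hCP ha)
      · exact fun hb => hxa (π.1.trans' (hCP hb) (π.1.symm' hab))
  exact hτ.1.not_ge hπτ

theorem not_overlap_of_subset_block (hτ : IsGreatest {σ | σ < π} τ) (hsingle : ∀ x : V, {x} ∈ Q)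
    {B : Set V} (hB : B ∈ Q) (hBP : B ⊆ {y | π.1.r x y}) : ¬Overlap {y | τ.1.r x y} B := by
  rintro ⟨⟨c, hcA, hcB⟩, hAnB, hBnA⟩
  let σ : Decomp Q := ⟨piA B, isDecomp_piA hsingle hB⟩
  rcases (show σ ≤ π from piA_le_of_subset_block hBP).eq_or_lt with h | h
  · obtain ⟨a, haA, haB⟩ := Set.not_subset.1 hAnB
    have hac : σ.1.r a c :=
      h ▸ π.1.trans' (π.1.symm' (block_subset_block hτ haA)) (block_subset_block hτ hcA)
    rcases hac with rfl | ⟨ha, -⟩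
    exacts [haB hcB, haB ha]
  · obtain ⟨b, hbB, hbA⟩ := Set.not_subset.1 hBnA
    exact hbA (τ.1.trans' hcA (hτ.2 h (Or.inr ⟨hcB, hbB⟩)))

end GreatestBelow

theorem isStrong_block_of_isGreatest {Q : Set (Set V)} (hI2 : CondI2 Q)
    (hinter : ∀ A ∈ Q, ∀ B ∈ Q, A ∩ B ∈ Q) (hsingle : ∀ x : V, {x} ∈ Q) {π τ : Decomp Q}
    (hτ : IsGreatest {σ | σ < π} τ) (x : V) : IsStrong Q {y | τ.1.r x y} := by
  refine isStrong_iff.2 ⟨τ.2 x, fun B hB hAB => ?_⟩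
  rcases (block_subset_block hτ).eq_or_ssubset with hAP | hAP
  · exact not_overlap_of_block_eq hτ hI2 hinter hAP hB hAB
  · obtain ⟨B', hB', hB'P, hAB'⟩ := exists_overlap_subset hI2 hinter hB (π.2 x) hAP hAB
    exact not_overlap_of_subset_block hτ hsingle hB' hB'P hAB'

/-- If `π` is completely join-irreducible in `D(V,I)`, then
`π* = ⋁{σ ∈ D(V,I) | σ < π}` (join taken in `D(V,I)`) is a strong
decomposition: all of its blocks are strong sets of `(V,I)`. -/
theorem stmt13 (I : Set (Set V)) (hI : IsIntervalSystem I)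
    (π : Decomp I) (hπ : IsCJI I π)
    (τ : Decomp I) (hτ : IsLUB {σ : Decomp I | σ < π} τ) :
    ∀ x : V, IsStrong I {y | τ.1.r x y} := by
  obtain ⟨hclosure, -, ⟨-, hsingle⟩, -, hI2⟩ := hI
  exact isStrong_block_of_isGreatest hI2 (fun A hA B hB => hclosure.inter_mem hA hB) hsingle
    (hπ.isGreatest_of_isLUB hτ)
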